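/- Let f : ℝ → ℝ be convex, and define P(α) := −min_{u ∈ [a,b]} (f(u) + (u − α)²) for α ∈ ℝ, where [a,b] ⊂ ℝ is a compact interval on which f is continuous. Then for every u ∈ [a,b], f(u) = max_{α ∈ ℝ} ( −P(α) − (u − α)² ), and the maximum is attained at α = u + f'(u)/2 when f is differentiable at u. -/
import Mathlib

theorem modified_legendre_duality (f : ℝ → ℝ)
    (hconv : ConvexOn ℝ Set.univ f)
    (a b : ℝ) (hab : a ≤ b)
    (P : ℝ → ℝ)
    (hP : ∀ α : ℝ, P α = -sInf ((fun u => f u + (u - α) ^ 2) '' Set.Icc a b))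
    (u : ℝ) (hu : u ∈ Set.Icc a b) :
    (∀ α : ℝ, -P α - (u - α) ^ 2 ≤ f u) ∧
    (DifferentiableAt ℝ f u →
      f u = -P (u + deriv f u / 2) - (u - (u + deriv f u / 2)) ^ 2) := by
  have hcont : Continuous f := hconv.locallyLipschitz.continuous
  have hbdd : ∀ α : ℝ, BddBelow ((fun u => f u + (u - α) ^ 2) '' Set.Icc a b) := by
    intro α
    exact (isCompact_Icc.image_of_continuousOn
      (by fun_prop : ContinuousOn (fun u => f u + (u - α) ^ 2) (Set.Icc a b))).bddBelow
  constructor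
  · intro α
    rw [hP α, neg_neg]
    have h1 : sInf ((fun u => f u + (u - α) ^ 2) '' Set.Icc a b) ≤ f u + (u - α) ^ 2 :=
      csInf_le (hbdd α) ⟨u, hu, rfl⟩
    linarith
  · intro hdiff
    set α := u + deriv f u / 2 with hα
    rw [hP α, neg_neg]
    have hgrad : ∀ v : ℝ, f u + deriv f u * (v - u) ≤ f v := by
      intro v
      rcases lt_trichotomy u v with h | h | h
      · have := hconv.deriv_le_slope (Set.mem_univ u) (Set.mem_univ v) h hdiff
        rw [slope_def_field] at this
        have hvu : 0 < v - u := by linarith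
        rw [le_div_iff₀ hvu] at this
        linarith
      · simp [h]
      · have := hconv.slope_le_deriv (Set.mem_univ v) (Set.mem_univ u) h hdiff
        rw [slope_def_field, div_le_iff₀ (by linarith : (0:ℝ) < u - v)] at this
        linarith
    have key : sInf ((fun u => f u + (u - α) ^ 2) '' Set.Icc a b) = f u + (u - α) ^ 2 := by
      apply le_antisymm (csInf_le (hbdd α) ⟨u, hu, rfl⟩)
      apply le_csInf ((Set.nonempty_Icc.2 hab).image _)
      rintro x ⟨v, hv, rfl⟩
      have h1 := hgrad v
      simp only [hα]
      nlinarith [sq_nonneg (v - u)]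
    rw [key]; ring
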